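/- Let A and B be connected simple graphs, each with at least two vertices, and let f : V(A) → V(B) be a function such that the Sierpiński product A ⊗_f B is 3-connected. Then the image of f has at least 2 elements; moreover, if B has at least three vertices, then the image of f has at least 3 elements. -/

import Mathlib

/-- The Sierpiński product of simple graphs `A` and `B` with respect to `f : V(A) → V(B)`:
vertices are pairs `(a, b)`; two vertices are adjacent iff they lie in the same fibre and
their second coordinates are adjacent in `B`, or their first coordinates are adjacent in `A`
and the second coordinates are given by `f` applied to the other first coordinate. -/
def SierpinskiProd {α β : Type*} (A : SimpleGraph α) (B : SimpleGraph β)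
    (f : α → β) : SimpleGraph (α × β) where
  Adj p q := (p.1 = q.1 ∧ B.Adj p.2 q.2) ∨
    (A.Adj p.1 q.1 ∧ p.2 = f q.1 ∧ q.2 = f p.1)
  symm := by
    constructor
    rintro ⟨a₁, b₁⟩ ⟨a₂, b₂⟩ (⟨h, hB⟩ | ⟨hA, h₁, h₂⟩)
    · exact Or.inl ⟨h.symm, hB.symm⟩
    · exact Or.inr ⟨hA.symm, h₂, h₁⟩
  loopless := by
    constructor
    rintro ⟨a, b⟩ (⟨_, hB⟩ | ⟨hA, _, _⟩)
    · exact B.irrefl hB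
    · exact A.irrefl hA

/-- A vertex `v` of a graph `G` is a separating vertex if deleting `v` (taking the induced
subgraph on the remaining vertices) yields a graph that is not connected. -/
def IsSeparatingVertex {V : Type*} (G : SimpleGraph V) (v : V) : Prop :=
  ¬ (G.induce ({v}ᶜ : Set V)).Connected

/-- A graph `G` is `k`-connected if it has more than `k` vertices and deleting any set of
fewer than `k` vertices leaves a connected graph. -/
def KConnected {V : Type*} [Fintype V] (k : ℕ) (G : SimpleGraph V) : Prop :=
  k < Fintype.card V ∧ ∀ S : Set V, S.ncard < k → (G.induce Sᶜ).Connected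

/-- `W` is a cut-set of `G` if deleting all vertices of `W` strictly increases the number of
connected components. -/
def IsCutSet {V : Type*} (G : SimpleGraph V) (W : Set V) : Prop :=
  Nat.card G.ConnectedComponent < Nat.card (G.induce Wᶜ).ConnectedComponent

/-- `W` is a minimal cut-set of `G` if it is a cut-set and no proper subset is a cut-set. -/
def IsMinCutSet {V : Type*} (G : SimpleGraph V) (W : Set V) : Prop :=
  IsCutSet G W ∧ ∀ W' ⊂ W, ¬ IsCutSet G W'

/-! Every edge of `A ⊗_f B` leaving a fibre `{a} × V(B)` starts at a vertex `(a, f a')`, so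
deleting the `|f(V(A))|` vertices `{a} × f(V(A))` cuts the rest of that fibre off from every
other fibre. When `f` is not onto and `A` has a second vertex, both sides are nonempty, hence a
`k`-connected Sierpiński product has `k ≤ |f(V(A))|` unless `f` is onto. -/

theorem SimpleGraph.Reachable.mem_of_forall_adj_mem {V : Type*} {G : SimpleGraph V} {s : Set V}
    (hs : ∀ u v, G.Adj u v → u ∈ s → v ∈ s) {u v : V} (huv : G.Reachable u v) (hu : u ∈ s) :
    v ∈ s := by
  obtain ⟨w⟩ := huv
  induction w with
  | nil => exact hu
  | cons hadj _ ih => exact ih (hs _ _ hadj hu)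

namespace SierpinskiProd

variable {α β : Type*} {A : SimpleGraph α} {B : SimpleGraph β} {f : α → β}

theorem fst_eq_of_adj {p q : α × β} (hpq : (SierpinskiProd A B f).Adj p q)
    (hp : p.2 ∉ Set.range f) : p.1 = q.1 := by
  rcases hpq with ⟨hfst, _⟩ | ⟨_, hsnd, _⟩
  · exact hfst
  · exact absurd ⟨q.1, hsnd.symm⟩ hp

theorem not_connected_induce_compl_fibre_range {a₀ a₁ : α} (hne : a₀ ≠ a₁) {b : β}
    (hb : b ∉ Set.range f) :
    ¬ ((SierpinskiProd A B f).induce ((a₀, ·) '' Set.range f)ᶜ).Connected := by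
  set S : Set (α × β) := (a₀, ·) '' Set.range f
  have hmem : ∀ a, (a, b) ∈ Sᶜ := by
    rintro a ⟨b', hb', hab⟩
    exact hb ((Prod.mk.inj hab).2 ▸ hb')
  have hclosed : ∀ p q : ↥Sᶜ, ((SierpinskiProd A B f).induce Sᶜ).Adj p q →
      p ∈ {x : ↥Sᶜ | x.1.1 = a₀} → q ∈ {x : ↥Sᶜ | x.1.1 = a₀} := by
    rintro ⟨⟨pa, pb⟩, hpS⟩ ⟨q, _⟩ hpq (rfl : pa = a₀)
    have hpb : pb ∉ Set.range f := fun hpb => hpS ⟨pb, hpb, rfl⟩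
    exact (fst_eq_of_adj hpq hpb).symm
  intro hconn
  exact hne.symm <| (hconn.preconnected ⟨(a₀, b), hmem a₀⟩ ⟨(a₁, b), hmem a₁⟩).mem_of_forall_adj_mem
    hclosed rfl

theorem le_ncard_range_of_kConnected [Fintype α] [Fintype β] {k : ℕ}
    (hk : KConnected k (SierpinskiProd A B f)) (hα : 2 ≤ Fintype.card α)
    (hf : ¬ Function.Surjective f) : k ≤ (Set.range f).ncard := by
  obtain ⟨a₀, a₁, hne⟩ := Fintype.exists_pair_of_one_lt_card hα
  obtain ⟨b, hb⟩ : ∃ b, b ∉ Set.range f := by simpa [Function.Surjective] using hf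
  by_contra! hlt
  have hcard : ((a₀, ·) '' Set.range f : Set (α × β)).ncard = (Set.range f).ncard :=
    Set.ncard_image_of_injective _ fun _ _ h => (Prod.mk.inj h).2
  exact not_connected_induce_compl_fibre_range hne hb (hk.2 _ (hcard ▸ hlt))

end SierpinskiProd

theorem sierpinski_three_connected_image_general {α β : Type*} [Fintype α] [Fintype β]
    (A : SimpleGraph α) (B : SimpleGraph β) (f : α → β)
    (hcardA : 2 ≤ Fintype.card α) (hcardB : 2 ≤ Fintype.card β)
    (h3 : KConnected 3 (SierpinskiProd A B f)) :
    2 ≤ (Set.range f).ncard ∧ (3 ≤ Fintype.card β → 3 ≤ (Set.range f).ncard) := by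
  have key : Fintype.card β ≤ (Set.range f).ncard ∨ 3 ≤ (Set.range f).ncard := by
    by_cases hf : Function.Surjective f
    · left
      rw [Set.range_eq_univ.mpr hf, Set.ncard_univ, Nat.card_eq_fintype_card]
    · exact .inr (SierpinskiProd.le_ncard_range_of_kConnected h3 hcardA hf)
  omega

/-- **Corollary.** If `A ⊗_f B` is `3`-connected (`A`, `B` connected nontrivial), then the
image of `f` has at least two elements; if moreover `B` has at least three vertices, the
image of `f` has at least three elements. -/
theorem sierpinski_three_connected_image {α β : Type*} [Fintype α] [Fintype β]
    (A : SimpleGraph α) (B : SimpleGraph β) (f : α → β)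
    (hA : A.Connected) (hB : B.Connected)
    (hcardA : 2 ≤ Fintype.card α) (hcardB : 2 ≤ Fintype.card β)
    (h3 : KConnected 3 (SierpinskiProd A B f)) :
    2 ≤ (Set.range f).ncard ∧ (3 ≤ Fintype.card β → 3 ≤ (Set.range f).ncard) :=
  sierpinski_three_connected_image_general A B f hcardA hcardB h3
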